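/- Let L > 0 and let λ ∈ ℝ with λ ≠ 0. Suppose u : [0,L]² → ℝ is of class C³ and satisfies the spectral equation λ u(x,y) + u_x(x,y) + u_xxx(x,y) − ∫ₓ^L u_yy(s,y) ds = 0 for all (x,y) ∈ Ω, together with the boundary conditions u(0,y) = u(L,y) = 0 and u_x(0,y) = u_x(L,y) = 0 for all y ∈ [0,L], u(x,L) = 0, u_y(x,L) = 0 and u_y(x,0) = 0 for all x ∈ [0,L], and ∫₀^L u_y(s,y) ds = 0 for all y ∈ [0,L]. Then u is identically zero on [0,L]². -/

import Mathlib

/-!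
Multiplying the equation by `u` and integrating in `x`, the terms `u u_x` and `u u_xxx` are exact
derivatives that vanish by the boundary conditions in `x`. Since `u(x,L) = 0` and
`∫₀^L u_y(s,y) ds = 0`, also `∫₀^L u(s,y) ds = 0`, so integrating the nonlocal term by parts in `x`
leaves `λ ∫ u² dx = -∫ V u_yy dx` with `V(x,y) = ∫ₓ^L u(s,y) ds`. Integrating by parts in `y`
(`u_y` vanishes at `y = 0, L`) turns `∫∫ V u_yy` into `-∫∫ W u_y` with `W(x,y) = ∫ₓ^L u_y(s,y) ds`,
and `W u_y = -∂ₓ(W²/2)` integrates to zero because `W` vanishes at `x = 0` and `x = L`.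
Hence `λ ∫∫ u² = 0`, and `λ ≠ 0` forces `u = 0`.
-/

open MeasureTheory Real

noncomputable section

/-- Partial derivative in `x` of `u(x,y)`. -/
def pdx (u : ℝ → ℝ → ℝ) (x y : ℝ) : ℝ := deriv (fun x' => u x' y) x

/-- Third partial derivative in `x` of `u(x,y)`. -/
def pdx3 (u : ℝ → ℝ → ℝ) (x y : ℝ) : ℝ := iteratedDeriv 3 (fun x' => u x' y) x

/-- Partial derivative in `y` of `u(x,y)`. -/
def pdy (u : ℝ → ℝ → ℝ) (x y : ℝ) : ℝ := deriv (fun y' => u x y') y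

/-- Second partial derivative in `y` of `u(x,y)`. -/
def pdy2 (u : ℝ → ℝ → ℝ) (x y : ℝ) : ℝ := iteratedDeriv 2 (fun y' => u x y') y

/-- The nonlocal operator `(∂ₓ⁻¹ w)(x,y) = -∫ₓ^L w(s,y) ds`. -/
def pxInv (L : ℝ) (w : ℝ → ℝ → ℝ) (x y : ℝ) : ℝ := -(∫ s in x..L, w s y)

/-- The adjoint nonlocal operator `((∂ₓ⁻¹)* w)(x,y) = ∫₀^x w(s,y) ds`. -/
def pxInvStar (w : ℝ → ℝ → ℝ) (x y : ℝ) : ℝ := ∫ s in (0:ℝ)..x, w s y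

open Set Function

section Partials

variable {u : ℝ → ℝ → ℝ}

theorem pdx3_eq_pdx_pdx_pdx (x y : ℝ) :
    pdx3 u x y = pdx (pdx (pdx u)) x y := by
  simp only [pdx3, iteratedDeriv_eq_iterate]
  rfl

theorem pdy2_eq_pdy_pdy (x y : ℝ) : pdy2 u x y = pdy (pdy u) x y := by
  simp only [pdy2, iteratedDeriv_eq_iterate]
  rfl

theorem hasDerivAt_pdx (hu : Differentiable ℝ (uncurry u)) (x y : ℝ) :
    HasDerivAt (fun x' => u x' y) (pdx u x y) x :=
  ((hu.comp (differentiable_id.prodMk (differentiable_const y))) x).hasDerivAt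

theorem hasDerivAt_pdy (hu : Differentiable ℝ (uncurry u)) (x y : ℝ) :
    HasDerivAt (u x) (pdy u x y) y :=
  ((hu.comp ((differentiable_const x).prodMk differentiable_id)) y).hasDerivAt

theorem uncurry_pdx_eq_fderiv (hu : Differentiable ℝ (uncurry u)) :
    uncurry (pdx u) = fun p => fderiv ℝ (uncurry u) p (1, 0) := by
  funext ⟨x, y⟩
  have hx : HasDerivAt (fun x' : ℝ => (x', y)) ((1 : ℝ), (0 : ℝ)) x :=
    (hasDerivAt_id x).prodMk (hasDerivAt_const x y)
  exact (hasDerivAt_pdx hu x y).unique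
    ((hu (x, y)).hasFDerivAt.comp_hasDerivAt (f := fun x' : ℝ => (x', y)) x hx)

theorem uncurry_pdy_eq_fderiv (hu : Differentiable ℝ (uncurry u)) :
    uncurry (pdy u) = fun p => fderiv ℝ (uncurry u) p (0, 1) := by
  funext ⟨x, y⟩
  have hy : HasDerivAt (fun y' : ℝ => (x, y')) ((0 : ℝ), (1 : ℝ)) y :=
    (hasDerivAt_const y x).prodMk (hasDerivAt_id y)
  exact (hasDerivAt_pdy hu x y).unique
    ((hu (x, y)).hasFDerivAt.comp_hasDerivAt (f := fun y' : ℝ => (x, y')) y hy)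

theorem contDiff_pdx {m n : WithTop ℕ∞} (hu : ContDiff ℝ m (uncurry u)) (hmn : n + 1 ≤ m) :
    ContDiff ℝ n (uncurry (pdx u)) := by
  rw [uncurry_pdx_eq_fderiv ((hu.of_le (le_add_self.trans hmn)).differentiable one_ne_zero)]
  exact (hu.fderiv_right hmn).clm_apply contDiff_const

theorem contDiff_pdy {m n : WithTop ℕ∞} (hu : ContDiff ℝ m (uncurry u)) (hmn : n + 1 ≤ m) :
    ContDiff ℝ n (uncurry (pdy u)) := by
  rw [uncurry_pdy_eq_fderiv ((hu.of_le (le_add_self.trans hmn)).differentiable one_ne_zero)]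
  exact (hu.fderiv_right hmn).clm_apply contDiff_const

end Partials

section ParametricIntegrals

theorem Continuous.integral_hasDerivAt_left {f : ℝ → ℝ} (hf : Continuous f) (b x : ℝ) :
    HasDerivAt (fun x' => ∫ s in x'..b, f s) (-f x) x :=
  intervalIntegral.integral_hasDerivAt_left (hf.intervalIntegrable _ _)
    hf.aestronglyMeasurable.stronglyMeasurableAtFilter hf.continuousAt

theorem Continuous.intervalIntegral_intervalIntegral_swap {F : ℝ → ℝ → ℝ}
    (hF : Continuous (uncurry F)) (a b c d : ℝ) :
    ∫ x in a..b, ∫ y in c..d, F x y = ∫ y in c..d, ∫ x in a..b, F x y :=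
  MeasureTheory.intervalIntegral_intervalIntegral_swap <|
    (hF.continuousOn.integrableOn_compact (isCompact_uIcc.prod isCompact_uIcc)).mono_set
      (prod_mono uIoc_subset_uIcc uIoc_subset_uIcc)

theorem continuous_intervalIntegral_of_continuous_uncurry {F : ℝ → ℝ → ℝ}
    (hF : Continuous (uncurry F)) (a b : ℝ) : Continuous fun y => ∫ x in a..b, F x y :=
  intervalIntegral.continuous_parametric_intervalIntegral_of_continuous'
    (f := fun y x => F x y) (hF.comp continuous_swap) a b

theorem continuous_tail_integral {g : ℝ → ℝ → ℝ} (hg : Continuous (uncurry g)) (b : ℝ) :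
    Continuous fun p : ℝ × ℝ => ∫ s in p.1..b, g s p.2 := by
  simp_rw [intervalIntegral.integral_symm b]
  exact (intervalIntegral.continuous_parametric_intervalIntegral_of_continuous
    (μ := volume) (f := fun p s => g s p.2) (by fun_prop) continuous_fst).neg

theorem hasDerivAt_intervalIntegral_of_continuous_uncurry {g g' : ℝ → ℝ → ℝ}
    (hg : Continuous (uncurry g)) (hg' : Continuous (uncurry g'))
    (hd : ∀ s y, HasDerivAt (g s) (g' s y) y) (a b y : ℝ) :
    HasDerivAt (fun y => ∫ s in a..b, g s y) (∫ s in a..b, g' s y) y := by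
  have hprim : (fun y => ∫ s in a..b, g s y) =
      fun y => (∫ s in a..b, g s 0) + ∫ t in (0:ℝ)..y, ∫ s in a..b, g' s t := by
    funext y
    have hftc : ∀ s, ∫ t in (0:ℝ)..y, g' s t = g s y - g s 0 := fun s =>
      intervalIntegral.integral_eq_sub_of_hasDerivAt (fun t _ => hd s t)
        ((hg'.comp (Continuous.prodMk_right s)).intervalIntegrable _ _)
    rw [← hg'.intervalIntegral_intervalIntegral_swap,
      intervalIntegral.integral_congr fun s _ => hftc s,
      intervalIntegral.integral_sub (f := fun s => g s y) (g := fun s => g s 0)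
        ((hg.comp (Continuous.prodMk_left y)).intervalIntegrable _ _)
        ((hg.comp (Continuous.prodMk_left 0)).intervalIntegrable _ _)]
    ring
  rw [hprim]
  exact (((continuous_intervalIntegral_of_continuous_uncurry hg' a b).integral_hasStrictDerivAt
    0 y).hasDerivAt).const_add _

end ParametricIntegrals

section OneVariable

variable {a b : ℝ}

theorem integral_mul_deriv_add_deriv3_eq_zero {f f' f'' f''' : ℝ → ℝ}
    (hf : ∀ x, HasDerivAt f (f' x) x) (hf' : ∀ x, HasDerivAt f' (f'' x) x)
    (hf'' : ∀ x, HasDerivAt f'' (f''' x) x) (hf''' : Continuous f''')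
    (ha : f a = 0) (hb : f b = 0) (ha' : f' a = 0) (hb' : f' b = 0) :
    ∫ x in a..b, f x * (f' x + f''' x) = 0 := by
  have hfc : Continuous f := continuous_iff_continuousAt.2 fun x => (hf x).continuousAt
  have hf'c : Continuous f' := continuous_iff_continuousAt.2 fun x => (hf' x).continuousAt
  have hprim : ∀ x ∈ uIcc a b,
      HasDerivAt (fun x => f x * f'' x - f' x * f' x / 2 + f x * f x / 2)
        (f x * (f' x + f''' x)) x := fun x _ =>
    ((((hf x).mul (hf'' x)).sub (((hf' x).mul (hf' x)).div_const 2)).add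
      (((hf x).mul (hf x)).div_const 2)).congr_deriv (by ring)
  rw [intervalIntegral.integral_eq_sub_of_hasDerivAt hprim
    ((by fun_prop : Continuous fun x => f x * (f' x + f''' x)).intervalIntegrable a b)]
  simp [ha, hb, ha', hb']

theorem integral_mul_tail_integral_eq_neg {f g : ℝ → ℝ} (hf : Continuous f) (hg : Continuous g)
    (hmean : ∫ x in a..b, f x = 0) :
    ∫ x in a..b, f x * ∫ s in x..b, g s = -∫ x in a..b, (∫ s in x..b, f s) * g x := by
  have hibp := intervalIntegral.integral_mul_deriv_eq_deriv_mul
    (u := fun x => ∫ s in x..b, g s) (v := fun x => -∫ s in x..b, f s)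
    (fun x _ => hg.integral_hasDerivAt_left b x)
    (fun x _ => (hf.integral_hasDerivAt_left b x).neg)
    (hg.neg.intervalIntegrable a b) (hf.neg.neg.intervalIntegrable a b)
  simp only [neg_neg, neg_mul_neg, intervalIntegral.integral_same, hmean, neg_zero, mul_zero,
    sub_zero] at hibp
  simp_rw [mul_comm (f _), hibp, zero_sub, mul_comm (g _)]

theorem eqOn_zero_of_integral_eq_zero_of_nonneg {f : ℝ → ℝ} (hf : Continuous f)
    (hpos : ∀ x, 0 ≤ f x) (hab : a < b) (h : ∫ x in a..b, f x = 0) : EqOn f 0 (Icc a b) := by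
  rw [intervalIntegral.integral_eq_zero_iff_of_le_of_nonneg_ae hab.le
    (Filter.Eventually.of_forall hpos) (hf.intervalIntegrable a b),
    Measure.restrict_congr_set Ioc_ae_eq_Icc] at h
  exact Measure.eqOn_Icc_of_ae_eq volume hab.ne h hf.continuousOn continuousOn_const

theorem kp_slice_energy_identity {f f' f'' f''' h : ℝ → ℝ} (lam : ℝ) (hab : a ≤ b)
    (hf : ∀ x, HasDerivAt f (f' x) x) (hf' : ∀ x, HasDerivAt f' (f'' x) x)
    (hf'' : ∀ x, HasDerivAt f'' (f''' x) x) (hf''' : Continuous f''') (hh : Continuous h)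
    (heq : ∀ x ∈ Ioo a b, lam * f x + f' x + f''' x - ∫ s in x..b, h s = 0)
    (ha : f a = 0) (hb : f b = 0) (ha' : f' a = 0) (hb' : f' b = 0)
    (hmean : ∫ x in a..b, f x = 0) :
    lam * (∫ x in a..b, f x ^ 2) + ∫ x in a..b, (∫ s in x..b, f s) * h x = 0 := by
  have hfc : Continuous f := continuous_iff_continuousAt.2 fun x => (hf x).continuousAt
  have hf'c : Continuous f' := continuous_iff_continuousAt.2 fun x => (hf' x).continuousAt
  have hH : Continuous fun x => ∫ s in x..b, h s :=
    continuous_iff_continuousAt.2 fun x => (hh.integral_hasDerivAt_left b x).continuousAt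
  have hzero : ∫ x in a..b, f x * (lam * f x + f' x + f''' x - ∫ s in x..b, h s) = 0 := by
    rw [intervalIntegral.integral_congr_Ioo_of_le hab (g := fun _ => 0)
      fun x hx => by simp only [heq x hx, mul_zero]]
    exact intervalIntegral.integral_zero
  have hexpand : ∫ x in a..b, f x * (lam * f x + f' x + f''' x - ∫ s in x..b, h s) =
      lam * (∫ x in a..b, f x ^ 2) + (∫ x in a..b, f x * (f' x + f''' x)) -
        ∫ x in a..b, f x * ∫ s in x..b, h s := by
    rw [intervalIntegral.integral_congr (g := fun x =>
        lam * f x ^ 2 + f x * (f' x + f''' x) - f x * ∫ s in x..b, h s) fun x _ => by ring,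
      intervalIntegral.integral_sub, intervalIntegral.integral_add,
      intervalIntegral.integral_const_mul]
    all_goals exact Continuous.intervalIntegrable (by fun_prop) _ _
  rw [hexpand, integral_mul_deriv_add_deriv3_eq_zero hf hf' hf'' hf''' ha hb ha' hb',
    integral_mul_tail_integral_eq_neg hfc hh hmean] at hzero
  linarith

end OneVariable

section TwoVariables

variable {a b c d : ℝ} {g g' g'' : ℝ → ℝ → ℝ}

theorem integral_eq_zero_of_integral_partial_eq_zero (hg : Continuous (uncurry g))
    (hg' : Continuous (uncurry g')) (hd : ∀ x y, HasDerivAt (g x) (g' x y) y)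
    (hab : a ≤ b) (hcd : c ≤ d) (hgd : ∀ x ∈ Icc a b, g x d = 0)
    (hmean' : ∀ y ∈ Icc c d, ∫ s in a..b, g' s y = 0) :
    ∀ y ∈ Icc c d, ∫ s in a..b, g s y = 0 := by
  intro y hy
  have hconst : ∀ t ∈ uIcc y d, HasDerivAt (fun t => ∫ s in a..b, g s t) 0 t := fun t ht => by
    simpa only [hmean' t (uIcc_subset_Icc hy (right_mem_Icc.2 hcd) ht)] using
      hasDerivAt_intervalIntegral_of_continuous_uncurry hg hg' hd a b t
  have hftc := intervalIntegral.integral_eq_sub_of_hasDerivAt hconst intervalIntegrable_const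
  rw [intervalIntegral.integral_congr (g := fun _ => 0) fun x hx => hgd x (uIcc_of_le hab ▸ hx),
    intervalIntegral.integral_zero, intervalIntegral.integral_zero] at hftc
  linarith

theorem integral_integral_tail_mul_deriv2_eq_zero (hg : Continuous (uncurry g))
    (hg' : Continuous (uncurry g')) (hg'' : Continuous (uncurry g''))
    (hd : ∀ x y, HasDerivAt (g x) (g' x y) y) (hd' : ∀ x y, HasDerivAt (g' x) (g'' x y) y)
    (hab : a ≤ b) (hcd : c ≤ d) (hgc : ∀ x ∈ Icc a b, g' x c = 0)
    (hgd : ∀ x ∈ Icc a b, g' x d = 0)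
    (hmean' : ∀ y ∈ Icc c d, ∫ s in a..b, g' s y = 0) :
    ∫ y in c..d, ∫ x in a..b, (∫ s in x..b, g s y) * g'' x y = 0 := by
  have hV : Continuous fun p : ℝ × ℝ => ∫ s in p.1..b, g s p.2 := continuous_tail_integral hg b
  have hW : Continuous fun p : ℝ × ℝ => ∫ s in p.1..b, g' s p.2 :=
    continuous_tail_integral hg' b
  have hibp : ∀ x ∈ uIcc a b, ∫ y in c..d, (∫ s in x..b, g s y) * g'' x y =
      -∫ y in c..d, (∫ s in x..b, g' s y) * g' x y := by
    intro x hx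
    rw [uIcc_of_le hab] at hx
    rw [intervalIntegral.integral_mul_deriv_eq_deriv_mul
      (fun y _ => hasDerivAt_intervalIntegral_of_continuous_uncurry hg hg' hd x b y)
      (fun y _ => hd' x y)
      ((hW.comp (Continuous.prodMk_right x)).intervalIntegrable c d)
      ((hg''.comp (Continuous.prodMk_right x)).intervalIntegrable c d), hgc x hx, hgd x hx]
    simp
  have hslice : ∀ y ∈ uIcc c d, ∫ x in a..b, (∫ s in x..b, g' s y) * g' x y = 0 := by
    intro y hy
    have hy_cont : Continuous fun x => g' x y := hg'.comp (Continuous.prodMk_left y)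
    have := integral_mul_tail_integral_eq_neg hy_cont hy_cont
      (hmean' y (uIcc_of_le hcd ▸ hy))
    simp_rw [mul_comm (g' _ y)] at this
    linarith
  calc ∫ y in c..d, ∫ x in a..b, (∫ s in x..b, g s y) * g'' x y
      = ∫ x in a..b, ∫ y in c..d, (∫ s in x..b, g s y) * g'' x y :=
        (Continuous.intervalIntegral_intervalIntegral_swap
          (F := fun x y => (∫ s in x..b, g s y) * g'' x y) (hV.mul hg'') a b c d).symm
    _ = -∫ y in c..d, ∫ x in a..b, (∫ s in x..b, g' s y) * g' x y := by
        rw [intervalIntegral.integral_congr hibp, intervalIntegral.integral_neg,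
          Continuous.intervalIntegral_intervalIntegral_swap
            (F := fun x y => (∫ s in x..b, g' s y) * g' x y) (hW.mul hg') a b c d]
    _ = 0 := by
        rw [intervalIntegral.integral_congr (g := fun _ => 0) hslice,
          intervalIntegral.integral_zero, neg_zero]

theorem integral_integral_sq_eq_zero_of_slice_energy {lam : ℝ} (hlam : lam ≠ 0)
    (hg : Continuous (uncurry g)) (hg' : Continuous (uncurry g')) (hg'' : Continuous (uncurry g''))
    (hd : ∀ x y, HasDerivAt (g x) (g' x y) y) (hd' : ∀ x y, HasDerivAt (g' x) (g'' x y) y)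
    (hab : a ≤ b) (hcd : c ≤ d) (hgc : ∀ x ∈ Icc a b, g' x c = 0)
    (hgd : ∀ x ∈ Icc a b, g' x d = 0)
    (hmean' : ∀ y ∈ Icc c d, ∫ s in a..b, g' s y = 0)
    (henergy : EqOn (fun y => lam * (∫ x in a..b, g x y ^ 2) +
      ∫ x in a..b, (∫ s in x..b, g s y) * g'' x y) 0 (Ioo c d)) :
    ∫ y in c..d, ∫ x in a..b, g x y ^ 2 = 0 := by
  have hsq : Continuous fun y => ∫ x in a..b, g x y ^ 2 :=
    continuous_intervalIntegral_of_continuous_uncurry (F := fun x y => g x y ^ 2)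
      (show Continuous fun p : ℝ × ℝ => g p.1 p.2 ^ 2 from hg.pow 2) a b
  have hnonlocal : Continuous fun y => ∫ x in a..b, (∫ s in x..b, g s y) * g'' x y :=
    continuous_intervalIntegral_of_continuous_uncurry
      (F := fun x y => (∫ s in x..b, g s y) * g'' x y)
      ((continuous_tail_integral hg b).mul hg'') a b
  have hint := intervalIntegral.integral_congr_Ioo_of_le (μ := volume) hcd henergy
  rw [intervalIntegral.integral_add (Continuous.intervalIntegrable (by fun_prop) c d)
      (hnonlocal.intervalIntegrable c d), intervalIntegral.integral_const_mul,
    integral_integral_tail_mul_deriv2_eq_zero hg hg' hg'' hd hd' hab hcd hgc hgd hmean'] at hint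
  simpa [hlam] using hint

theorem eq_zero_of_integral_integral_sq_eq_zero (hg : Continuous (uncurry g)) (hab : a < b)
    (hcd : c < d) (h : ∫ y in c..d, ∫ x in a..b, g x y ^ 2 = 0) :
    ∀ x ∈ Icc a b, ∀ y ∈ Icc c d, g x y = 0 := by
  have hslice := eqOn_zero_of_integral_eq_zero_of_nonneg
    (continuous_intervalIntegral_of_continuous_uncurry (F := fun x y => g x y ^ 2)
      (show Continuous fun p : ℝ × ℝ => g p.1 p.2 ^ 2 from hg.pow 2) a b)
    (fun y => intervalIntegral.integral_nonneg hab.le fun x _ => sq_nonneg (g x y)) hcd h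
  intro x hx y hy
  exact pow_eq_zero_iff two_ne_zero |>.1 <| eqOn_zero_of_integral_eq_zero_of_nonneg
    ((hg.comp (Continuous.prodMk_left y)).pow 2) (fun x => sq_nonneg (g x y)) hab (hslice hy) hx

end TwoVariables

/-- No nontrivial solution of the spectral problem (with drift term, `λ ≠ 0`):
if `λ u + u_x + u_xxx - ∫ₓ^L u_yy(s,y) ds = 0` on `Ω` with the over-determined
boundary conditions, then `u ≡ 0` on `[0,L]²`. -/
theorem kp_spectral_uniqueness_drift (L lam : ℝ) (hL : 0 < L) (hlam : lam ≠ 0)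
    (u : ℝ → ℝ → ℝ) (hu : ContDiff ℝ 3 (fun p : ℝ × ℝ => u p.1 p.2))
    (heq : ∀ x ∈ Set.Ioo (0:ℝ) L, ∀ y ∈ Set.Ioo (0:ℝ) L,
      lam * u x y + pdx u x y + pdx3 u x y - (∫ s in x..L, pdy2 u s y) = 0)
    (hbx : ∀ y ∈ Set.Icc (0:ℝ) L,
      u 0 y = 0 ∧ u L y = 0 ∧ pdx u 0 y = 0 ∧ pdx u L y = 0)
    (hby : ∀ x ∈ Set.Icc (0:ℝ) L, u x L = 0 ∧ pdy u x L = 0 ∧ pdy u x 0 = 0)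
    (hint : ∀ y ∈ Set.Icc (0:ℝ) L, (∫ s in (0:ℝ)..L, pdy u s y) = 0) :
    ∀ x ∈ Set.Icc (0:ℝ) L, ∀ y ∈ Set.Icc (0:ℝ) L, u x y = 0 := by
  replace hu : ContDiff ℝ 3 (uncurry u) := hu
  have hux : ContDiff ℝ 2 (uncurry (pdx u)) := contDiff_pdx hu (by norm_num)
  have huxx : ContDiff ℝ 1 (uncurry (pdx (pdx u))) := contDiff_pdx hux (by norm_num)
  have huxxx : ContDiff ℝ 0 (uncurry (pdx (pdx (pdx u)))) := contDiff_pdx huxx (by norm_num)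
  have huy : ContDiff ℝ 2 (uncurry (pdy u)) := contDiff_pdy hu (by norm_num)
  have huyy : ContDiff ℝ 1 (uncurry (pdy (pdy u))) := contDiff_pdy huy (by norm_num)
  have hmean : ∀ y ∈ Icc 0 L, ∫ s in 0..L, u s y = 0 :=
    integral_eq_zero_of_integral_partial_eq_zero hu.continuous huy.continuous
      (hasDerivAt_pdy (hu.differentiable (by norm_num))) hL.le hL.le (fun x hx => (hby x hx).1)
      hint
  have hslice : EqOn (fun y => lam * (∫ x in 0..L, u x y ^ 2) +
      ∫ x in 0..L, (∫ s in x..L, u s y) * pdy (pdy u) x y) 0 (Ioo 0 L) := fun y hy => by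
    obtain ⟨hu0, huL, hux0, huxL⟩ := hbx y (Ioo_subset_Icc_self hy)
    exact kp_slice_energy_identity lam hL.le
      (hasDerivAt_pdx (hu.differentiable (by norm_num)) · y)
      (hasDerivAt_pdx (hux.differentiable (by norm_num)) · y)
      (hasDerivAt_pdx (huxx.differentiable (by norm_num)) · y)
      (huxxx.continuous.comp (Continuous.prodMk_left y))
      (huyy.continuous.comp (Continuous.prodMk_left y))
      (fun x hx => by simpa only [pdx3_eq_pdx_pdx_pdx, pdy2_eq_pdy_pdy] using heq x hx y hy)
      hu0 huL hux0 huxL (hmean y (Ioo_subset_Icc_self hy))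
  exact eq_zero_of_integral_integral_sq_eq_zero hu.continuous hL hL <|
    integral_integral_sq_eq_zero_of_slice_energy hlam hu.continuous huy.continuous huyy.continuous
      (hasDerivAt_pdy (hu.differentiable (by norm_num)))
      (hasDerivAt_pdy (huy.differentiable (by norm_num))) hL.le hL.le
      (fun x hx => (hby x hx).2.2) (fun x hx => (hby x hx).2.1) hint hslice

end
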